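/- Define h(ρ) = (12/π²) ∫_{-1}^{ρ} arccos(σ²/(3-2σ²)) / √(3-σ²) dσ - 1 for ρ ∈ [-1,1]. Then h(1) = 1, h is odd, continuous, and strictly increasing on [-1,1]. -/

import Mathlib

/-!
Put `k = √(3(1-σ²)/(3-σ²))`. Then `σ²/(3-2σ²) = (1-k²)/(1+k²)`, so
`arccos (σ²/(3-2σ²)) = 2 arctan k`, and `2 arctan k / √(3-σ²)` is the integral over `s ∈ [0,1]`
of the kernel `2√3 √(1-σ²) / ((1+3s²)(1-σ²) + 2)`. Swapping the two integrations, the integral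
over `σ ∈ [-1,1]` has an arcsin antiderivative and equals
`2π (√3/(1+3s²) - √2/((1+3s²)√(1+s²)))`. The two terms integrate over `[0,1]` to
`arctan √3 = π/3` and `arctan 1 = π/4`, so the full integral is `2π(π/3 - π/4) = π²/6`,
i.e. `h(1) = 1`. The integrand is even, continuous, and positive on `(-1,1)`, which gives oddness,
continuity and strict monotonicity.
-/
open Real Set

noncomputable section

/-- The correlation function of the 2-bit orthant protocol:
h(ρ) = (12/π²) ∫_{-1}^{ρ} arccos(σ²/(3-2σ²))/√(3-σ²) dσ - 1. -/
def hOrt2 (ρ : ℝ) : ℝ :=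
  (12 / π ^ 2) * (∫ σ in (-1 : ℝ)..ρ, arccos (σ ^ 2 / (3 - 2 * σ ^ 2)) / Real.sqrt (3 - σ ^ 2)) - 1

open MeasureTheory intervalIntegral

theorem intervalIntegral_integral_swap_of_continuousOn {E : Type*} [NormedAddCommGroup E]
    [NormedSpace ℝ E] {f : ℝ → ℝ → E} {a b c d : ℝ} (hab : a ≤ b) (hcd : c ≤ d)
    (hf : ContinuousOn (Function.uncurry f) (Icc a b ×ˢ Icc c d)) :
    ∫ x in a..b, ∫ y in c..d, f x y = ∫ y in c..d, ∫ x in a..b, f x y := by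
  have hint : Integrable (Function.uncurry f)
      ((volume.restrict (Ioc a b)).prod (volume.restrict (Ioc c d))) := by
    rw [Measure.prod_restrict, ← Measure.volume_eq_prod]
    exact (hf.integrableOn_compact (isCompact_Icc.prod isCompact_Icc)).mono_set
      (prod_mono Ioc_subset_Icc_self Ioc_subset_Icc_self)
  simp only [integral_of_le hab, integral_of_le hcd]
  exact integral_integral_swap hint

theorem integral_add_integral_neg_of_even {E : Type*} [NormedAddCommGroup E]
    [NormedSpace ℝ E] {f : ℝ → E} {a ρ : ℝ} (hf : ∀ x, f (-x) = f x)
    (hint : IntervalIntegrable f volume (-a) a) (hρ : ρ ∈ Icc (-a) a) :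
    (∫ x in -a..-ρ, f x) + ∫ x in -a..ρ, f x = ∫ x in -a..a, f x := by
  have hsub : ∀ {x y}, x ∈ Icc (-a) a → y ∈ Icc (-a) a → IntervalIntegrable f volume x y :=
    fun hx hy => hint.mono_set
      (uIcc_subset_uIcc (Icc_subset_uIcc hx) (Icc_subset_uIcc hy))
  have ha : -a ∈ Icc (-a) a := left_mem_Icc.2 (by linarith [hρ.1, hρ.2])
  have ha' : a ∈ Icc (-a) a := right_mem_Icc.2 (by linarith [hρ.1, hρ.2])
  have hreflect : ∫ x in -a..-ρ, f x = ∫ x in ρ..a, f x := by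
    simp only [← integral_comp_neg, hf]
  rw [hreflect, add_comm, integral_add_adjacent_intervals (hsub ha hρ) (hsub hρ ha')]

theorem strictMonoOn_integral_of_pos {f : ℝ → ℝ} {a b : ℝ} (hf : ContinuousOn f (Icc a b))
    (hpos : ∀ x ∈ Ioo a b, 0 < f x) : StrictMonoOn (fun x => ∫ t in a..x, f t) (Icc a b) := by
  intro x hx y hy hxy
  have hsub : ∀ {u v}, u ∈ Icc a b → v ∈ Icc a b → IntervalIntegrable f volume u v :=
    fun hu hv => (hf.mono (uIcc_subset_Icc hu hv)).intervalIntegrable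
  have hxy_pos : 0 < ∫ t in x..y, f t :=
    intervalIntegral_pos_of_pos_on (hsub hx hy)
      (fun t ht => hpos t ⟨hx.1.trans_lt ht.1, ht.2.trans_le hy.2⟩) hxy
  have ha : a ∈ Icc a b := left_mem_Icc.2 (hx.1.trans hx.2)
  simp only [← integral_add_adjacent_intervals (hsub ha hx) (hsub hx hy)]
  linarith

theorem integral_div_one_add_mul_sq (k a b : ℝ) :
    ∫ s in a..b, k / (1 + (k * s) ^ 2) = arctan (k * b) - arctan (k * a) := by
  simp only [div_eq_mul_inv, intervalIntegral.integral_const_mul]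
  rw [mul_integral_comp_mul_left (f := fun x => (1 + x ^ 2)⁻¹), integral_inv_one_add_sq]

theorem arccos_one_sub_sq_div_one_add_sq {k : ℝ} (hk : 0 ≤ k) :
    arccos ((1 - k ^ 2) / (1 + k ^ 2)) = 2 * arctan k := by
  have hcos : cos (2 * arctan k) = (1 - k ^ 2) / (1 + k ^ 2) := by
    rw [cos_two_mul, cos_sq_arctan]
    field_simp
    ring
  rw [← hcos, arccos_cos (by linarith [arctan_nonneg.2 hk])
    (by linarith [arctan_lt_pi_div_two k])]

theorem hasDerivAt_arcsin_mul_div_sqrt {a b σ : ℝ} (ha : 0 ≤ a) (hb : 0 < b)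
    (hσ : σ ∈ Ioo (-1 : ℝ) 1) :
    HasDerivAt (fun σ => arcsin (√b * σ / √(a * (1 - σ ^ 2) + b)))
      (√b * √(a + b) / ((a * (1 - σ ^ 2) + b) * √(1 - σ ^ 2))) σ := by
  have h1σ : 0 < 1 - σ ^ 2 := by nlinarith [hσ.1, hσ.2]
  set w := a * (1 - σ ^ 2) + b with hw
  have hw0 : 0 < w := by positivity
  have hsqrtw : 0 < √w := sqrt_pos.2 hw0
  have hu2 : 1 - (√b * σ / √w) ^ 2 = (a + b) * (1 - σ ^ 2) / w := by
    rw [div_pow, mul_pow, sq_sqrt hb.le, sq_sqrt hw0.le]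
    field_simp
    ring
  have hu_sq_lt : (√b * σ / √w) ^ 2 < 1 := by
    have : 0 < (a + b) * (1 - σ ^ 2) / w := by positivity
    linarith
  have hpoly : HasDerivAt (fun σ => a * (1 - σ ^ 2) + b) (a * -(2 * σ)) σ := by
    simpa using (((hasDerivAt_pow 2 σ).const_sub 1).const_mul a).add_const b
  have hu : HasDerivAt (fun σ => √b * σ / √(a * (1 - σ ^ 2) + b))
      ((√b * √w - √b * σ * (a * -(2 * σ) / (2 * √w))) / √w ^ 2) σ :=
    ((hasDerivAt_id σ).const_mul √b |>.congr_deriv (mul_one _)).div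
      (hpoly.sqrt hw0.ne') hsqrtw.ne'
  obtain ⟨hu_gt, hu_lt⟩ := abs_lt.1 ((sq_lt_one_iff_abs_lt_one _).1 hu_sq_lt)
  refine ((hasDerivAt_arcsin hu_gt.ne' hu_lt.ne).comp σ hu).congr_deriv ?_
  rw [hu2, sqrt_div' _ hw0.le, sqrt_mul (by positivity), sq_sqrt hw0.le]
  field_simp
  rw [sq_sqrt hw0.le, sq_sqrt (by positivity), hw]
  ring

theorem integral_sqrt_one_sub_sq_div {a b : ℝ} (ha : 0 < a) (hb : 0 < b) :
    ∫ σ in (-1 : ℝ)..1, √(1 - σ ^ 2) / (a * (1 - σ ^ 2) + b) =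
      π / a * (1 - √(b / (a + b))) := by
  have hden : ∀ σ ∈ Icc (-1 : ℝ) 1, 0 < a * (1 - σ ^ 2) + b := fun σ hσ => by
    have : 0 ≤ 1 - σ ^ 2 := by nlinarith [hσ.1, hσ.2]
    positivity
  set F : ℝ → ℝ := fun σ =>
    (arcsin σ - √(b / (a + b)) * arcsin (√b * σ / √(a * (1 - σ ^ 2) + b))) / a
  have hF_cont : ContinuousOn F (Icc (-1) 1) := by
    refine ContinuousOn.div_const (continuous_arcsin.continuousOn.sub
      (continuousOn_const.mul (continuous_arcsin.comp_continuousOn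
        (ContinuousOn.div (by fun_prop) (by fun_prop) fun σ hσ => ?_)))) a
    exact (sqrt_pos.2 (hden σ hσ)).ne'
  have hF_deriv : ∀ σ ∈ Ioo (-1 : ℝ) 1,
      HasDerivAt F (√(1 - σ ^ 2) / (a * (1 - σ ^ 2) + b)) σ := by
    intro σ hσ
    have h1σ : 0 < 1 - σ ^ 2 := by nlinarith [hσ.1, hσ.2]
    refine (((hasDerivAt_arcsin hσ.1.ne' hσ.2.ne).sub
      ((hasDerivAt_arcsin_mul_div_sqrt ha.le hb hσ).const_mul _)).div_const a).congr_deriv ?_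
    rw [sqrt_div' _ (by positivity : 0 ≤ a + b)]
    field_simp
    rw [sq_sqrt hb.le, sq_sqrt h1σ.le]
    ring
  have hint : IntervalIntegrable (fun σ => √(1 - σ ^ 2) / (a * (1 - σ ^ 2) + b)) volume (-1) 1 :=
    (ContinuousOn.div (by fun_prop) (by fun_prop) fun σ hσ =>
      (hden σ hσ).ne').intervalIntegrable_of_Icc (by norm_num)
  rw [integral_eq_sub_of_hasDeriv_right_of_le (by norm_num) hF_cont
    (fun σ hσ => (hF_deriv σ hσ).hasDerivWithinAt) hint]
  have hb1 : √b / √b = 1 := div_self (sqrt_pos.2 hb).ne'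
  simp only [F, arcsin_one, arcsin_neg, mul_one, one_pow, sub_self, mul_zero, zero_add, hb1,
    mul_neg, even_two, Even.neg_pow, neg_div, sub_neg_eq_add]
  ring

theorem integral_sqrt_two_div_one_add_three_mul_sq_mul_sqrt :
    ∫ s in (0 : ℝ)..1, √2 / ((1 + 3 * s ^ 2) * √(1 + s ^ 2)) = π / 4 := by
  have hderiv : ∀ s : ℝ, HasDerivAt (fun s => arctan (√2 * s / √(1 + s ^ 2)))
      (√2 / ((1 + 3 * s ^ 2) * √(1 + s ^ 2))) s := by
    intro s
    have hp : 0 < 1 + s ^ 2 := by positivity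
    have hsqrt : HasDerivAt (fun s => √(1 + s ^ 2)) (s / √(1 + s ^ 2)) s := by
      refine ((((hasDerivAt_pow 2 s).const_add 1).sqrt hp.ne')).congr_deriv ?_
      field_simp
      ring
    have hu : HasDerivAt (fun s => √2 * s / √(1 + s ^ 2))
        ((√2 * √(1 + s ^ 2) - √2 * s * (s / √(1 + s ^ 2))) / √(1 + s ^ 2) ^ 2) s :=
      ((hasDerivAt_id s).const_mul √2 |>.congr_deriv (mul_one _)).div hsqrt
        (sqrt_pos.2 hp).ne'
    refine hu.arctan.congr_deriv ?_
    rw [div_pow, mul_pow, sq_sqrt zero_le_two, sq_sqrt hp.le]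
    field_simp
    rw [sq_sqrt hp.le]
    ring
  have hcont : Continuous fun s : ℝ => √2 / ((1 + 3 * s ^ 2) * √(1 + s ^ 2)) :=
    continuous_const.div (by fun_prop) fun s => by positivity
  rw [integral_eq_sub_of_hasDerivAt (fun s _ => hderiv s) (hcont.intervalIntegrable 0 1)]
  norm_num [div_self (sqrt_pos.2 two_pos).ne', arctan_one]

def hOrt2Integrand (σ : ℝ) : ℝ := arccos (σ ^ 2 / (3 - 2 * σ ^ 2)) / √(3 - σ ^ 2)

theorem hOrt2_eq (ρ : ℝ) :
    hOrt2 ρ = 12 / π ^ 2 * (∫ σ in (-1 : ℝ)..ρ, hOrt2Integrand σ) - 1 :=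
  rfl

theorem hOrt2Integrand_neg (σ : ℝ) : hOrt2Integrand (-σ) = hOrt2Integrand σ := by
  rw [hOrt2Integrand, hOrt2Integrand, neg_sq]

theorem continuousOn_hOrt2Integrand : ContinuousOn hOrt2Integrand (Icc (-1) 1) := by
  refine ContinuousOn.div (continuous_arccos.comp_continuousOn
    (ContinuousOn.div (by fun_prop) (by fun_prop) fun σ hσ => ?_)) (by fun_prop) fun σ hσ => ?_
  · nlinarith [hσ.1, hσ.2]
  · exact (sqrt_pos.2 (by nlinarith [hσ.1, hσ.2])).ne'

theorem hOrt2Integrand_pos {σ : ℝ} (hσ : σ ∈ Ioo (-1 : ℝ) 1) : 0 < hOrt2Integrand σ := by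
  have hσ2 : σ ^ 2 < 1 := by nlinarith [hσ.1, hσ.2]
  refine div_pos (arccos_pos.2 ?_) (sqrt_pos.2 (by linarith))
  rw [div_lt_one (by linarith)]
  linarith

def hOrt2Kernel (σ s : ℝ) : ℝ := 2 * √3 * (√(1 - σ ^ 2) / ((1 + 3 * s ^ 2) * (1 - σ ^ 2) + 2))

theorem continuousOn_uncurry_hOrt2Kernel :
    ContinuousOn (Function.uncurry hOrt2Kernel) (Icc (-1) 1 ×ˢ Icc 0 1) := by
  refine continuousOn_const.mul (ContinuousOn.div (by fun_prop) (by fun_prop) ?_)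
  rintro ⟨σ, s⟩ ⟨hσ, -⟩
  have : 0 ≤ 1 - σ ^ 2 := by nlinarith [hσ.1, hσ.2]
  positivity

theorem hOrt2Integrand_eq_integral_hOrt2Kernel {σ : ℝ} (hσ : σ ∈ Icc (-1 : ℝ) 1) :
    hOrt2Integrand σ = ∫ s in (0 : ℝ)..1, hOrt2Kernel σ s := by
  have h1 : 0 ≤ 1 - σ ^ 2 := by nlinarith [hσ.1, hσ.2]
  have h3 : 0 < 3 - σ ^ 2 := by linarith
  have h32 : 0 < 3 - 2 * σ ^ 2 := by linarith
  set k := √3 * √(1 - σ ^ 2) / √(3 - σ ^ 2) with hk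
  have hk2 : k ^ 2 = 3 * (1 - σ ^ 2) / (3 - σ ^ 2) := by
    rw [hk, div_pow, mul_pow, sq_sqrt zero_le_three, sq_sqrt h1, sq_sqrt h3.le]
  have hkernel : ∀ s, hOrt2Kernel σ s = 2 / √(3 - σ ^ 2) * (k / (1 + (k * s) ^ 2)) := by
    intro s
    rw [hOrt2Kernel, mul_pow, hk2, hk]
    field_simp
    rw [sq_sqrt h3.le]
    ring
  have harccos : arccos (σ ^ 2 / (3 - 2 * σ ^ 2)) = 2 * arctan k := by
    rw [← arccos_one_sub_sq_div_one_add_sq (by positivity), hk2, one_sub_div h3.ne',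
      one_add_div h3.ne', div_div_div_cancel_right₀ h3.ne']
    congr 1
    rw [div_eq_div_iff h32.ne' (by linarith)]
    ring
  simp only [hkernel, intervalIntegral.integral_const_mul, integral_div_one_add_mul_sq,
    hOrt2Integrand, harccos, mul_one, mul_zero, arctan_zero, sub_zero]
  ring

theorem integral_hOrt2Kernel_left (s : ℝ) :
    ∫ σ in (-1 : ℝ)..1, hOrt2Kernel σ s =
      2 * π * (√3 / (1 + (√3 * s) ^ 2) - √2 / ((1 + 3 * s ^ 2) * √(1 + s ^ 2))) := by
  have hsqrt : √(2 / (1 + 3 * s ^ 2 + 2)) = √2 / (√3 * √(1 + s ^ 2)) := by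
    rw [show 1 + 3 * s ^ 2 + 2 = 3 * (1 + s ^ 2) by ring, sqrt_div' _ (by positivity),
      sqrt_mul zero_le_three]
  simp only [hOrt2Kernel, intervalIntegral.integral_const_mul]
  rw [integral_sqrt_one_sub_sq_div (by positivity) two_pos, hsqrt, mul_pow, sq_sqrt zero_le_three]
  field_simp

theorem integral_hOrt2Integrand : ∫ σ in (-1 : ℝ)..1, hOrt2Integrand σ = π ^ 2 / 6 := by
  calc ∫ σ in (-1 : ℝ)..1, hOrt2Integrand σ
      = ∫ σ in (-1 : ℝ)..1, ∫ s in (0 : ℝ)..1, hOrt2Kernel σ s :=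
        integral_congr fun σ hσ => hOrt2Integrand_eq_integral_hOrt2Kernel (by simpa using hσ)
    _ = ∫ s in (0 : ℝ)..1, ∫ σ in (-1 : ℝ)..1, hOrt2Kernel σ s :=
        intervalIntegral_integral_swap_of_continuousOn (by norm_num) zero_le_one
          continuousOn_uncurry_hOrt2Kernel
    _ = 2 * π * (arctan √3 - π / 4) := by
        simp only [integral_hOrt2Kernel_left, intervalIntegral.integral_const_mul]
        rw [intervalIntegral.integral_sub, integral_div_one_add_mul_sq,
          integral_sqrt_two_div_one_add_three_mul_sq_mul_sqrt]
        · simp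
        all_goals exact
          (continuous_const.div (by fun_prop) fun s => by positivity).intervalIntegrable _ _
    _ = π ^ 2 / 6 := by
        rw [arctan_sqrt_three]
        ring

theorem stmt_12 :
    hOrt2 1 = 1 ∧ (∀ ρ ∈ Icc (-1 : ℝ) 1, hOrt2 (-ρ) = -hOrt2 ρ) ∧
      ContinuousOn hOrt2 (Icc (-1 : ℝ) 1) ∧ StrictMonoOn hOrt2 (Icc (-1 : ℝ) 1) := by
  have hnorm : 12 / π ^ 2 * (π ^ 2 / 6) = 2 := by
    field_simp
    norm_num
  have hint : IntervalIntegrable hOrt2Integrand volume (-1) 1 :=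
    continuousOn_hOrt2Integrand.intervalIntegrable_of_Icc (by norm_num)
  refine ⟨?_, fun ρ hρ => ?_, ?_, ?_⟩
  · rw [hOrt2_eq, integral_hOrt2Integrand]
    linarith
  · have hsum := integral_add_integral_neg_of_even hOrt2Integrand_neg hint hρ
    rw [integral_hOrt2Integrand] at hsum
    rw [hOrt2_eq, hOrt2_eq]
    linear_combination 12 / π ^ 2 * hsum + hnorm
  · have hprim := continuousOn_primitive_interval (μ := volume)
      (continuousOn_hOrt2Integrand.integrableOn_Icc.mono_set (uIcc_of_le (by norm_num)).subset)
    rw [uIcc_of_le (by norm_num)] at hprim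
    exact (continuousOn_const.mul hprim).sub continuousOn_const
  · intro x hx y hy hxy
    have hmono := strictMonoOn_integral_of_pos continuousOn_hOrt2Integrand
      (fun σ hσ => hOrt2Integrand_pos hσ) hx hy hxy
    rw [hOrt2_eq, hOrt2_eq]
    gcongr

end
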